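/- Let H ∈ ℂ^{n×n} be Hermitian. The maximum of tr(Pᴴ H P) over all P ∈ ℂ^{n×k} with Pᴴ P = I_k equals the sum of the k largest eigenvalues of H. -/

import Mathlib

open scoped ComplexOrder
open Matrix

/-- The tuple `f` rearranged into decreasing order; `sortedDesc f 0` is the largest entry. -/
noncomputable def sortedDesc {m : ℕ} (f : Fin m → ℝ) : Fin m → ℝ :=
  fun i => (f ∘ Tuple.sort f) i.rev

/-- The singular values of a complex matrix, in decreasing order. -/
noncomputable def sv {n k : ℕ} (B : Matrix (Fin n) (Fin k) ℂ) : Fin k → ℝ :=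
  sortedDesc fun i =>
    Real.sqrt ((Matrix.posSemidef_conjTranspose_mul_self B).isHermitian.eigenvalues i)

/-- The trace (nuclear) norm: the sum of the singular values. -/
noncomputable def trNorm {n k : ℕ} (B : Matrix (Fin n) (Fin k) ℂ) : ℝ := ∑ i, sv B i

/-- The Frobenius norm. -/
noncomputable def frobNorm {n k : ℕ} (A : Matrix (Fin n) (Fin k) ℂ) : ℝ :=
  Real.sqrt (∑ i, ∑ j, ‖A i j‖ ^ 2)

/-- `‖sin Θ(R(X), R(Y))‖_F` where `Θ` is the diagonal matrix of canonical angles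
`θ_i = arccos σ_i(Xᴴ Y)` between the column spaces of `X` and `Y`. -/
noncomputable def sinThetaF {n k : ℕ} (X Y : Matrix (Fin n) (Fin k) ℂ) : ℝ :=
  Real.sqrt (∑ i, Real.sin (Real.arccos (sv (Xᴴ * Y) i)) ^ 2)

/-- The smallest singular value. -/
noncomputable def smin {n k : ℕ} (B : Matrix (Fin n) (Fin k) ℂ) : ℝ := ⨅ i, sv B i

/-- The spectral norm (largest singular value). -/
noncomputable def s2norm {n k : ℕ} (B : Matrix (Fin n) (Fin k) ℂ) : ℝ := ⨆ i, sv B i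

/-- The positive semidefinite square root of a positive semidefinite matrix (the former
`Matrix.PosSemidef.sqrt`, with its old definition). -/
noncomputable def psdSqrt {k : ℕ} {A : Matrix (Fin k) (Fin k) ℂ} (hA : A.PosSemidef) :
    Matrix (Fin k) (Fin k) ℂ :=
  (hA.isHermitian.eigenvectorUnitary : Matrix (Fin k) (Fin k) ℂ) *
    diagonal ((↑) ∘ (√·) ∘ hA.isHermitian.eigenvalues) *
    (star hA.isHermitian.eigenvectorUnitary : Matrix (Fin k) (Fin k) ℂ)

/-- The orthonormal polar factor `B (Bᴴ B)^{-1/2}` (for `B` of full column rank). -/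
noncomputable def polarFactor {n k : ℕ} (B : Matrix (Fin n) (Fin k) ℂ) :
    Matrix (Fin n) (Fin k) ℂ :=
  B * (psdSqrt (Matrix.posSemidef_conjTranspose_mul_self B))⁻¹

/-- Eigenvalues of a Hermitian matrix, in decreasing order. -/
noncomputable def eigsDesc {n : ℕ} {H : Matrix (Fin n) (Fin n) ℂ} (hH : H.IsHermitian) :
    Fin n → ℝ :=
  sortedDesc hH.eigenvalues

/-!
Diagonalize `H = U D Uᴴ`. Since `P ↦ Uᴴ P` permutes the matrices with orthonormal columns,
`tr (Pᴴ H P) = ∑ᵢ λᵢ tᵢ` with `Q = Uᴴ P` and `tᵢ = (Q Qᴴ)ᵢᵢ`. As `Q Qᴴ` is an orthogonal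
projection of rank `k`, the weights satisfy `0 ≤ tᵢ ≤ 1` and `∑ tᵢ = k`, and for such weights
`∑ᵢ λᵢ tᵢ` is at most the sum of the `k` largest `λᵢ` (the bathtub principle). The eigenvectors
of the `k` largest eigenvalues attain the bound.
-/

theorem sum_mul_le_sum_of_forall_le {ι : Type*} [Fintype ι] (μ t : ι → ℝ) (s : Finset ι)
    (hμ : ∀ i ∈ s, ∀ j ∉ s, μ j ≤ μ i) (ht0 : ∀ i, 0 ≤ t i) (ht1 : ∀ i, t i ≤ 1)
    (hsum : ∑ i, t i = s.card) :
    ∑ i, μ i * t i ≤ ∑ i ∈ s, μ i := by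
  classical
  rcases s.eq_empty_or_nonempty with rfl | hs
  · have ht : ∀ i, t i = 0 := fun i =>
      congrFun ((Fintype.sum_eq_zero_iff_of_nonneg ht0).mp (by simpa using hsum)) i
    simp [ht]
  -- the minimum of `μ` over `s` separates the values on `s` from those off `s`
  obtain ⟨a, ha, hamin⟩ := s.exists_min_image μ hs
  have hterm : ∀ i, μ i * t i - (if i ∈ s then μ i else 0) ≤
      μ a * (t i - if i ∈ s then 1 else 0) := by
    intro i
    split_ifs with hi
    · nlinarith [hamin i hi, ht1 i]
    · nlinarith [hμ a ha i hi, ht0 i]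
  have hzero : ∑ i, (t i - if i ∈ s then 1 else 0) = 0 := by
    simp [Finset.sum_sub_distrib, hsum]
  rw [← sub_nonpos]
  calc ∑ i, μ i * t i - ∑ i ∈ s, μ i
      = ∑ i, (μ i * t i - if i ∈ s then μ i else 0) := by
        simp [Finset.sum_sub_distrib, Finset.sum_ite_mem]
    _ ≤ ∑ i, μ a * (t i - if i ∈ s then 1 else 0) := Finset.sum_le_sum fun i _ => hterm i
    _ = 0 := by rw [← Finset.mul_sum, hzero, mul_zero]

section TopEmb

variable {n k : ℕ} (hkn : k ≤ n) (f : Fin n → ℝ)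

noncomputable def topEmb : Fin k ↪ Fin n :=
  ⟨fun j => Tuple.sort f (Fin.castLE hkn j).rev,
    (Tuple.sort f).injective.comp (Fin.rev_injective.comp (Fin.castLE_injective hkn))⟩

theorem apply_topEmb (j : Fin k) : f (topEmb hkn f j) = sortedDesc f (Fin.castLE hkn j) :=
  rfl

theorem apply_le_apply_topEmb {i : Fin n} (hi : i ∉ Set.range (topEmb hkn f)) (j : Fin k) :
    f i ≤ f (topEmb hkn f j) := by
  obtain ⟨b, rfl⟩ := (Tuple.sort f).surjective i
  have hb : k ≤ (b.rev : ℕ) := by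
    by_contra! h
    exact hi ⟨⟨b.rev, h⟩, congrArg (Tuple.sort f) b.rev_rev⟩
  refine Tuple.monotone_sort f (Fin.le_def.mpr ?_)
  simp only [Fin.val_rev, Fin.val_castLE] at hb ⊢
  omega

theorem sum_mul_le_sum_sortedDesc (t : Fin n → ℝ) (ht0 : ∀ i, 0 ≤ t i) (ht1 : ∀ i, t i ≤ 1)
    (hsum : ∑ i, t i = k) :
    ∑ i, f i * t i ≤ ∑ j : Fin k, sortedDesc f (Fin.castLE hkn j) := by
  have hdom : ∀ i ∈ Finset.univ.map (topEmb hkn f), ∀ j ∉ Finset.univ.map (topEmb hkn f),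
      f j ≤ f i := by
    simp only [Finset.mem_map, Finset.mem_univ, true_and, forall_exists_index,
      forall_apply_eq_imp_iff]
    exact fun a j hj => apply_le_apply_topEmb hkn f (by simpa using hj) a
  exact (sum_mul_le_sum_of_forall_le f t _ hdom ht0 ht1 (by simpa using hsum)).trans_eq
    (Finset.sum_map _ _ _)

end TopEmb

namespace Matrix

theorem trace_mul_diagonal_mul {R m n : Type*} [CommSemiring R] [Fintype m] [Fintype n]
    [DecidableEq m] (A : Matrix n m R) (d : m → R) (B : Matrix m n R) :
    trace (A * diagonal d * B) = ∑ i, d i * (B * A) i i := by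
  rw [trace_mul_cycle]
  exact Finset.sum_congr rfl fun i _ => by rw [diag_apply, mul_diagonal, mul_comm]

section Isometry

variable {R n κ : Type*} [Semiring R] [StarRing R] [Fintype n] [DecidableEq n]

theorem submatrix_one_conjTranspose_mul_mul_submatrix_one (e : κ → n) (A : Matrix n n R) :
    ((1 : Matrix n n R).submatrix id e)ᴴ * A * (1 : Matrix n n R).submatrix id e =
      A.submatrix e e := by
  ext i j
  simp [mul_apply, one_apply]

theorem conjTranspose_mul_self_mul_left {U : Matrix n n R} (hU : Uᴴ * U = 1) (Q : Matrix n κ R) :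
    (U * Q)ᴴ * (U * Q) = Qᴴ * Q := by
  rw [conjTranspose_mul, Matrix.mul_assoc, ← Matrix.mul_assoc Uᴴ, hU, Matrix.one_mul]

theorem conjTranspose_mul_conj_mul_left {U : Matrix n n R} (hU : Uᴴ * U = 1) (D : Matrix n n R)
    (Q : Matrix n κ R) :
    (U * Q)ᴴ * (U * D * Uᴴ) * (U * Q) = Qᴴ * D * Q := by
  simp only [conjTranspose_mul, Matrix.mul_assoc]
  rw [← Matrix.mul_assoc Uᴴ U, hU, Matrix.one_mul, ← Matrix.mul_assoc Uᴴ U, hU, Matrix.one_mul]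

end Isometry

section RowWeights

variable {𝕜 m κ : Type*} [RCLike 𝕜] [Fintype m] [Fintype κ]

theorem re_diag_self_mul_conjTranspose_nonneg (Q : Matrix m κ 𝕜) (i : m) :
    0 ≤ RCLike.re ((Q * Qᴴ) i i) :=
  (RCLike.nonneg_iff.mp (posSemidef_self_mul_conjTranspose Q).diag_nonneg).1

theorem re_diag_self_mul_conjTranspose_le_one [DecidableEq κ] {Q : Matrix m κ 𝕜}
    (hQ : Qᴴ * Q = 1) (i : m) : RCLike.re ((Q * Qᴴ) i i) ≤ 1 := by
  classical
  set M := 1 - Q * Qᴴ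
  -- `M` is a Hermitian idempotent, hence `M = M Mᴴ` is positive semidefinite
  have hM : M * Mᴴ = M := by
    simp only [M, conjTranspose_sub, conjTranspose_one, conjTranspose_mul,
      conjTranspose_conjTranspose, sub_mul, mul_sub, Matrix.one_mul, Matrix.mul_one]
    rw [Matrix.mul_assoc, ← Matrix.mul_assoc Qᴴ, hQ, Matrix.one_mul]
    abel
  have hMii := re_diag_self_mul_conjTranspose_nonneg M i
  rw [hM] at hMii
  simpa [M] using hMii

theorem sum_re_diag_self_mul_conjTranspose [DecidableEq κ] {Q : Matrix m κ 𝕜}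
    (hQ : Qᴴ * Q = 1) : ∑ i, RCLike.re ((Q * Qᴴ) i i) = Fintype.card κ := by
  rw [← map_sum]
  change RCLike.re (trace (Q * Qᴴ)) = _
  rw [trace_mul_comm, hQ, trace_one]
  simp

end RowWeights

variable {𝕜 : Type*} [RCLike 𝕜]

theorem IsHermitian.exists_unitary_diagonal_conj {n : Type*} [Fintype n] [DecidableEq n]
    {H : Matrix n n 𝕜} (hH : H.IsHermitian) :
    ∃ U : Matrix n n 𝕜, Uᴴ * U = 1 ∧ U * Uᴴ = 1 ∧
      H = U * diagonal (RCLike.ofReal ∘ hH.eigenvalues) * Uᴴ :=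
  ⟨hH.eigenvectorUnitary, Unitary.star_mul_self_of_mem hH.eigenvectorUnitary.2,
    Unitary.mul_star_self_of_mem hH.eigenvectorUnitary.2, hH.spectral_theorem⟩

theorem re_trace_conjTranspose_mul_diagonal_mul_le {n k : ℕ} (hkn : k ≤ n) (d : Fin n → ℝ)
    {Q : Matrix (Fin n) (Fin k) 𝕜} (hQ : Qᴴ * Q = 1) :
    RCLike.re (trace (Qᴴ * diagonal (RCLike.ofReal ∘ d : Fin n → 𝕜) * Q)) ≤
      ∑ j : Fin k, sortedDesc d (Fin.castLE hkn j) := by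
  rw [trace_mul_diagonal_mul, map_sum]
  simp only [Function.comp_apply, RCLike.re_ofReal_mul]
  exact sum_mul_le_sum_sortedDesc hkn d _ (re_diag_self_mul_conjTranspose_nonneg Q)
    (re_diag_self_mul_conjTranspose_le_one hQ)
    (by simpa using sum_re_diag_self_mul_conjTranspose hQ)

end Matrix

/-- Fan's trace maximization principle. -/
theorem fan_trace_max {n k : ℕ} (hkn : k ≤ n)
    {H : Matrix (Fin n) (Fin n) ℂ} (hH : H.IsHermitian) :
    IsGreatest {x : ℝ | ∃ P : Matrix (Fin n) (Fin k) ℂ, Pᴴ * P = 1 ∧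
        x = (Matrix.trace (Pᴴ * H * P)).re}
      (∑ i : Fin k, eigsDesc hH (Fin.castLE hkn i)) := by
  obtain ⟨U, hUU, hUU', hHU⟩ := hH.exists_unitary_diagonal_conj
  have hconj : ∀ Q : Matrix (Fin n) (Fin k) ℂ, (U * Q)ᴴ * H * (U * Q) =
      Qᴴ * diagonal (RCLike.ofReal ∘ hH.eigenvalues : Fin n → ℂ) * Q := fun Q => by
    conv_lhs => rw [hHU]
    exact conjTranspose_mul_conj_mul_left hUU _ Q
  constructor
  · set e := topEmb hkn hH.eigenvalues
    set E : Matrix (Fin n) (Fin k) ℂ := (1 : Matrix (Fin n) (Fin n) ℂ).submatrix id e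
    refine ⟨U * E, ?_, ?_⟩
    · rw [conjTranspose_mul_self_mul_left hUU, ← Matrix.mul_one Eᴴ,
        submatrix_one_conjTranspose_mul_mul_submatrix_one, submatrix_one _ e.injective]
    · rw [hconj, submatrix_one_conjTranspose_mul_mul_submatrix_one]
      simp only [trace, diag_apply, submatrix_apply, diagonal_apply_eq, Function.comp_apply,
        Complex.re_sum, eigsDesc]
      exact Finset.sum_congr rfl fun j _ => (apply_topEmb hkn _ j).symm
  · rintro _ ⟨P, hP, rfl⟩
    obtain ⟨Q, rfl⟩ : ∃ Q, P = U * Q := ⟨Uᴴ * P, by rw [← Matrix.mul_assoc, hUU', Matrix.one_mul]⟩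
    rw [conjTranspose_mul_self_mul_left hUU] at hP
    rw [hconj]
    exact re_trace_conjTranspose_mul_diagonal_mul_le hkn _ hP
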